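/- arXiv:2306.10256 — 3 statements merged into one kernel-verified Lean document; each statement's English description precedes it below -/
import Mathlib

section
/- Let Ω ⊂ ℝ² be an open, bounded, connected but not simply connected domain with boundary of class C¹, and let w ∈ C²(Ω) ∩ C¹(Ω̄) satisfy −Δw ≤ e^w pointwise in Ω, w ≥ 0 in Ω and w = 0 on ∂Ω. Let Ω* denote the interior of the closure of the union of all bounded connected components of ℝ² \ ∂Ω, and define ŵ : Ω* → ℝ by ŵ = w on Ω and ŵ = 0 on Ω* \ Ω. Then ŵ satisfies −Δŵ ≤ e^{ŵ} in Ω* in the sense of distributions: for every φ ∈ C²(Ω̄*) with φ = 0 on ∂Ω* and φ ≥ 0 in Ω*, one has −∫_{Ω*} ŵ Δφ dx ≤ ∫_{Ω*} e^{ŵ} φ dx. -/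
open MeasureTheory Metric Real Set

/-- The Euclidean Laplacian of `f : ℂ → ℝ`, identifying `ℝ²` with `ℂ`. -/
noncomputable def lap (f : ℂ → ℝ) (x : ℂ) : ℝ :=
  fderiv ℝ (fun y => fderiv ℝ f y 1) x 1 +
  fderiv ℝ (fun y => fderiv ℝ f y Complex.I) x Complex.I

/-- The squared norm of the gradient of `f : ℂ → ℝ`. -/
noncomputable def gradSq (f : ℂ → ℝ) (x : ℂ) : ℝ :=
  (fderiv ℝ f x 1) ^ 2 + (fderiv ℝ f x Complex.I) ^ 2

/-- The standard Liouville bubble `U_λ(x) = ln( (λ/(1+(λ²/8)|x|²))² )`. -/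
noncomputable def Ufun (l : ℝ) (z : ℂ) : ℝ :=
  Real.log ((l / (1 + l ^ 2 / 8 * ‖z‖ ^ 2)) ^ 2)

/-- A set is a rectifiable Jordan curve: homeomorphic image of the circle with
finite 1-dimensional Hausdorff measure. -/
def IsRectJordanCurve (s : Set ℂ) : Prop :=
  (∃ f : ↥(Metric.sphere (0 : ℂ) 1) → ℂ,
    Continuous f ∧ Function.Injective f ∧ Set.range f = s) ∧
  μH[1] s < ⊤

/-- A set is a finite union of rectifiable Jordan curves. -/
def IsFinUnionRectJordan (s : Set ℂ) : Prop :=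
  ∃ (n : ℕ) (c : Fin n → Set ℂ), (∀ i, IsRectJordanCurve (c i)) ∧ s = ⋃ i, c i

/-- A bounded open set has boundary of class `C¹`: the boundary is a finite union of
images of periodic, regular, injective `C¹` loops. -/
def IsC1Boundary (Ω : Set ℂ) : Prop :=
  ∃ (n : ℕ) (γ : Fin n → ℝ → ℂ),
    (∀ i, ContDiff ℝ 1 (γ i)) ∧
    (∀ i, Function.Periodic (γ i) 1) ∧
    (∀ i t, deriv (γ i) t ≠ 0) ∧
    (∀ i, Set.InjOn (γ i) (Set.Ico (0 : ℝ) 1)) ∧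
    frontier Ω = ⋃ i, Set.range (γ i)

/-- `Φ` is a conformal map from the closed unit disk onto `closure ω`: continuous on the
closed disk, holomorphic and injective on the open disk, mapping the open disk onto `ω`. -/
def IsConformalOnto (Φ : ℂ → ℂ) (ω : Set ℂ) : Prop :=
  ContinuousOn Φ (closure (Metric.ball (0 : ℂ) 1)) ∧
  Φ '' closure (Metric.ball (0 : ℂ) 1) = closure ω ∧
  DifferentiableOn ℂ Φ (Metric.ball (0 : ℂ) 1) ∧
  Set.InjOn Φ (Metric.ball (0 : ℂ) 1) ∧
  Φ '' Metric.ball (0 : ℂ) 1 = ω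

open Filter Topology

/-! Truncate `w` at small values: for a convex `C²` profile `G_ε` vanishing on `(-∞, ε]` with
slope in `[0, 1]`, the function `G_ε ∘ ŵ` is `C²` with compact support inside `Ω`, because
`w = 0` on `∂Ω`. The chain rule gives `Δ(G_ε ∘ w) = G_ε''(w) |∇w|² + G_ε'(w) Δw ≥ -e^w`, so
Green's identity on the whole plane, which has no boundary terms, yields
`-∫ (G_ε ∘ ŵ) Δφ ≤ ∫_Ω e^ŵ φ`. Dominated convergence as `ε → 0` and `e^ŵ φ ≥ 0` on `Ω* ⊇ Ω`
conclude. -/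

section Laplacian

variable {E : Type*} [NormedAddCommGroup E] [NormedSpace ℝ E]

theorem fderiv_fderiv_comp_apply {G G₁ G₂ : ℝ → ℝ} (hG : ∀ s, HasDerivAt G (G₁ s) s)
    (hG₁ : ∀ s, HasDerivAt G₁ (G₂ s) s) {w : E → ℝ} {x : E} (hw : ContDiffAt ℝ 2 w x)
    (v : E) :
    fderiv ℝ (fun y => fderiv ℝ (G ∘ w) y v) x v =
      G₂ (w x) * fderiv ℝ w x v ^ 2 + G₁ (w x) * fderiv ℝ (fun y => fderiv ℝ w y v) x v := by
  have hdiff : ∀ᶠ y in 𝓝 x, DifferentiableAt ℝ w y :=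
    (hw.eventually (by simp)).mono fun y hy => hy.differentiableAt (by simp)
  have hchain : (fun y => fderiv ℝ (G ∘ w) y v) =ᶠ[𝓝 x]
      fun y => G₁ (w y) * fderiv ℝ w y v := hdiff.mono fun y hy => by
    simp [((hG (w y)).comp_hasFDerivAt y hy.hasFDerivAt).fderiv]
  have hG₁w : HasFDerivAt (fun y => G₁ (w y)) (G₂ (w x) • fderiv ℝ w x) x :=
    (hG₁ (w x)).comp_hasFDerivAt x (hw.differentiableAt (by simp)).hasFDerivAt
  have hdw : DifferentiableAt ℝ (fun y => fderiv ℝ w y v) x :=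
    ((hw.fderiv_right (m := 1) (by norm_num)).differentiableAt (by simp)).clm_apply
      (differentiableAt_const v)
  rw [hchain.fderiv_eq, (hG₁w.fun_mul hdw.hasFDerivAt).fderiv]
  simp only [add_apply, smul_apply, smul_eq_mul]
  ring

theorem lap_comp {G G₁ G₂ : ℝ → ℝ} (hG : ∀ s, HasDerivAt G (G₁ s) s)
    (hG₁ : ∀ s, HasDerivAt G₁ (G₂ s) s) {w : ℂ → ℝ} {x : ℂ} (hw : ContDiffAt ℝ 2 w x) :
    lap (G ∘ w) x = G₂ (w x) * gradSq w x + G₁ (w x) * lap w x := by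
  simp only [lap, gradSq, fderiv_fderiv_comp_apply hG hG₁ hw]
  ring

theorem Filter.EventuallyEq.lap_eq {f g : ℂ → ℝ} {x : ℂ} (h : f =ᶠ[𝓝 x] g) :
    lap f x = lap g x := by
  have hv : ∀ v : ℂ, (fun y => fderiv ℝ f y v) =ᶠ[𝓝 x] fun y => fderiv ℝ g y v :=
    fun v => (h.fderiv (𝕜 := ℝ)).mono fun y hy => by simp only [hy]
  simp only [lap, (hv 1).fderiv_eq, (hv Complex.I).fderiv_eq]

theorem lap_of_notMem_tsupport {f : ℂ → ℝ} {x : ℂ} (hx : x ∉ tsupport f) : lap f x = 0 := by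
  have hv : ∀ v : ℂ, x ∉ tsupport (fun y => fderiv ℝ f y v) :=
    fun v h => hx (tsupport_fderiv_apply_subset ℝ v h)
  simp [lap, fderiv_of_notMem_tsupport ℝ (hv 1), fderiv_of_notMem_tsupport ℝ (hv Complex.I)]

theorem ContDiff.continuous_fderiv_fderiv_apply {f : E → ℝ} (hf : ContDiff ℝ 2 f) (v : E) :
    Continuous fun x => fderiv ℝ (fun y => fderiv ℝ f y v) x v :=
  (((hf.fderiv_right (m := 1) (by norm_num)).clm_apply contDiff_const).continuous_fderiv
    (by simp)).clm_apply continuous_const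

theorem ContDiff.continuous_lap {f : ℂ → ℝ} (hf : ContDiff ℝ 2 f) : Continuous (lap f) :=
  (hf.continuous_fderiv_fderiv_apply 1).add (hf.continuous_fderiv_fderiv_apply Complex.I)

end Laplacian

theorem HasCompactSupport.integrable_mul {X : Type*} [TopologicalSpace X]
    [MeasurableSpace X] [OpensMeasurableSpace X] {μ : Measure X} [IsFiniteMeasureOnCompacts μ]
    {a b : X → ℝ} (hac : HasCompactSupport a) (ha : Continuous a) (hb : Continuous b) :
    Integrable (fun x => a x * b x) μ :=
  (ha.mul hb).integrable_of_hasCompactSupport hac.mul_right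

section Green

variable {E : Type*} [NormedAddCommGroup E] [NormedSpace ℝ E] [FiniteDimensional ℝ E]
  [MeasurableSpace E] [BorelSpace E] {μ : Measure E} [μ.IsAddHaarMeasure]

theorem integral_mul_fderiv_fderiv_eq {f g : E → ℝ} (hf : ContDiff ℝ 2 f)
    (hfc : HasCompactSupport f) (hg : ContDiff ℝ 2 g) (v : E) :
    ∫ x, f x * fderiv ℝ (fun y => fderiv ℝ g y v) x v ∂μ =
      ∫ x, fderiv ℝ (fun y => fderiv ℝ f y v) x v * g x ∂μ := by
  have hC1 : ∀ {h : E → ℝ}, ContDiff ℝ 2 h → ContDiff ℝ 1 fun y => fderiv ℝ h y v :=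
    fun hh => (hh.fderiv_right (m := 1) (by norm_num)).clm_apply contDiff_const
  have hdiff : ∀ {h : E → ℝ}, ContDiff ℝ 1 h → ∀ x, DifferentiableAt ℝ h x :=
    fun hh x => hh.differentiable one_ne_zero x
  have hf' := hC1 hf
  have hg' := hC1 hg
  have hfc' := hfc.fderiv_apply (𝕜 := ℝ) v
  rw [integral_mul_fderiv_eq_neg_fderiv_mul_of_integrable
      (hfc'.integrable_mul hf'.continuous hg'.continuous)
      (hfc.integrable_mul hf.continuous (hg.continuous_fderiv_fderiv_apply v))
      (hfc.integrable_mul hf.continuous hg'.continuous)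
      (fun x _ => hdiff (hf.of_le (by norm_num)) x) (fun x _ => hdiff hg' x),
    integral_mul_fderiv_eq_neg_fderiv_mul_of_integrable
      ((hfc'.fderiv_apply (𝕜 := ℝ) v).integrable_mul (hf.continuous_fderiv_fderiv_apply v)
        hg.continuous)
      (hfc'.integrable_mul hf'.continuous hg'.continuous)
      (hfc'.integrable_mul hf'.continuous hg.continuous)
      (fun x _ => hdiff hf' x) (fun x _ => hdiff (hg.of_le (by norm_num)) x),
    neg_neg]

theorem integral_mul_lap_eq {f φ : ℂ → ℝ} (hf : ContDiff ℝ 2 f) (hfc : HasCompactSupport f)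
    (hφ : ContDiff ℝ 2 φ) :
    ∫ x, f x * lap φ x = ∫ x, lap f x * φ x := by
  have hfφ'' : ∀ v, Integrable fun x => f x * fderiv ℝ (fun y => fderiv ℝ φ y v) x v :=
    fun v => hfc.integrable_mul hf.continuous (hφ.continuous_fderiv_fderiv_apply v)
  have hf''φ : ∀ v, Integrable fun x => fderiv ℝ (fun y => fderiv ℝ f y v) x v * φ x :=
    fun v => ((hfc.fderiv_apply (𝕜 := ℝ) v).fderiv_apply (𝕜 := ℝ) v).integrable_mul
      (hf.continuous_fderiv_fderiv_apply v) hφ.continuous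
  simp only [lap, mul_add, add_mul]
  rw [integral_add (hfφ'' 1) (hfφ'' Complex.I), integral_add (hf''φ 1) (hf''φ Complex.I),
    integral_mul_fderiv_fderiv_eq hf hfc hφ, integral_mul_fderiv_fderiv_eq hf hfc hφ]

end Green

theorem neg_integral_mul_lap_le {f φ g : ℂ → ℝ} {s : Set ℂ} (hs : MeasurableSet s)
    (hf : ContDiff ℝ 2 f) (hfc : HasCompactSupport f) (hfs : tsupport f ⊆ s)
    (hφ : ContDiff ℝ 2 φ) (hg : IntegrableOn g s) (hle : ∀ x ∈ s, -g x ≤ lap f x * φ x) :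
    -∫ x, f x * lap φ x ≤ ∫ x in s, g x := by
  have hlapc : HasCompactSupport (lap f) :=
    hfc.mono' fun x hx => by_contra fun h => hx (lap_of_notMem_tsupport h)
  have hlapφ : Integrable fun x => lap f x * φ x :=
    hlapc.integrable_mul hf.continuous_lap hφ.continuous
  rw [integral_mul_lap_eq hf hfc hφ, ← setIntegral_eq_integral_of_forall_compl_eq_zero
    fun x hx => by rw [lap_of_notMem_tsupport fun h => hx (hfs h), zero_mul]]
  have := setIntegral_mono_on hg.neg hlapφ.integrableOn hs hle
  rw [Pi.neg_def, integral_neg] at this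
  linarith

section CutoffProfile

/-- A `C²` convex approximation of `s ↦ max s 0` that vanishes on `(-∞, ε]`. -/
noncomputable def cutoffProfile (ε s : ℝ) : ℝ :=
  ∫ t in (0 : ℝ)..s, smoothTransition (t / ε - 1)

variable {ε s : ℝ}

theorem continuous_smoothTransition_div_sub_one (ε : ℝ) :
    Continuous fun t => smoothTransition (t / ε - 1) :=
  smoothTransition.continuous.comp (by fun_prop)

theorem hasDerivAt_cutoffProfile (ε s : ℝ) :
    HasDerivAt (cutoffProfile ε) (smoothTransition (s / ε - 1)) s :=
  ((continuous_smoothTransition_div_sub_one ε).integral_hasStrictDerivAt 0 s).hasDerivAt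

theorem hasDerivAt_smoothTransition_div_sub_one (ε s : ℝ) :
    HasDerivAt (fun t => smoothTransition (t / ε - 1))
      (deriv (fun t => smoothTransition (t / ε - 1)) s) s :=
  (smoothTransition.contDiff.comp (by fun_prop) : ContDiff ℝ 1 _).differentiable one_ne_zero s
    |>.hasDerivAt

theorem deriv_smoothTransition_div_sub_one_nonneg (hε : 0 < ε) (s : ℝ) :
    0 ≤ deriv (fun t => smoothTransition (t / ε - 1)) s :=
  (hasDerivAt_smoothTransition_div_sub_one ε s).nonneg_of_monotone
    (smoothTransition.monotone.comp fun a b hab => by gcongr)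

theorem contDiff_cutoffProfile (ε : ℝ) : ContDiff ℝ 2 (cutoffProfile ε) := by
  have hderiv : deriv (cutoffProfile ε) = fun s => smoothTransition (s / ε - 1) :=
    funext fun s => (hasDerivAt_cutoffProfile ε s).deriv
  rw [show (2 : WithTop ℕ∞) = 1 + 1 from rfl, contDiff_succ_iff_deriv, hderiv]
  exact ⟨fun s => (hasDerivAt_cutoffProfile ε s).differentiableAt, by simp,
    smoothTransition.contDiff.comp (by fun_prop)⟩

theorem cutoffProfile_of_le (hε : 0 < ε) (hs : s ≤ ε) : cutoffProfile ε s = 0 := by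
  have hzero : ∀ t ∈ uIcc 0 s, smoothTransition (t / ε - 1) = 0 := by
    intro t ht
    have htε : t ≤ ε := (mem_uIcc.1 ht).elim (fun h => h.2.trans hs) fun h => h.2.trans hε.le
    exact smoothTransition.zero_of_nonpos (by rw [sub_nonpos, div_le_one hε]; exact htε)
  simp [cutoffProfile, intervalIntegral.integral_congr hzero]

theorem cutoffProfile_nonneg (hs : 0 ≤ s) : 0 ≤ cutoffProfile ε s :=
  intervalIntegral.integral_nonneg hs fun _ _ => smoothTransition.nonneg _

theorem cutoffProfile_le (hs : 0 ≤ s) : cutoffProfile ε s ≤ s := by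
  simpa [cutoffProfile] using intervalIntegral.integral_mono_on hs
    ((continuous_smoothTransition_div_sub_one ε).intervalIntegrable _ _)
    (intervalIntegrable_const (μ := volume)) fun t _ => smoothTransition.le_one (t / ε - 1)

theorem sub_le_cutoffProfile (hε : 0 < ε) (hs : 0 ≤ s) : s - 2 * ε ≤ cutoffProfile ε s := by
  rcases le_total s (2 * ε) with hs2 | hs2
  · linarith [cutoffProfile_nonneg (ε := ε) hs]
  have hone : ∀ t ∈ uIcc (2 * ε) s, smoothTransition (t / ε - 1) = 1 := by
    intro t ht
    refine smoothTransition.one_of_one_le ?_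
    rw [le_sub_iff_add_le, le_div_iff₀ hε]
    linarith [(uIcc_of_le hs2 ▸ ht).1]
  have hint := (continuous_smoothTransition_div_sub_one ε).intervalIntegrable (μ := volume)
  rw [cutoffProfile, ← intervalIntegral.integral_add_adjacent_intervals (hint 0 (2 * ε))
    (hint _ s), intervalIntegral.integral_congr hone]
  simpa using intervalIntegral.integral_nonneg (by positivity : (0 : ℝ) ≤ 2 * ε)
    fun t _ => smoothTransition.nonneg (t / ε - 1)

theorem tendsto_cutoffProfile (hs : 0 ≤ s) :
    Tendsto (fun ε => cutoffProfile ε s) (𝓝[>] 0) (𝓝 s) := by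
  have hlower : Tendsto (fun ε => s - 2 * ε) (𝓝[>] 0) (𝓝 s) :=
    tendsto_nhdsWithin_of_tendsto_nhds ((continuous_const.sub (continuous_const.mul
      continuous_id)).tendsto' (0 : ℝ) s (by simp))
  refine tendsto_of_tendsto_of_tendsto_of_le_of_le' hlower tendsto_const_nhds ?_
    (Eventually.of_forall fun ε => cutoffProfile_le hs)
  filter_upwards [self_mem_nhdsWithin] with ε hε using sub_le_cutoffProfile hε hs

theorem neg_le_lap_cutoffProfile_comp (hε : 0 < ε) {w : ℂ → ℝ} {x : ℂ}
    (hw : ContDiffAt ℝ 2 w x) {c : ℝ} (hc : 0 ≤ c) (hsub : -lap w x ≤ c) :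
    -c ≤ lap (cutoffProfile ε ∘ w) x := by
  rw [lap_comp (hasDerivAt_cutoffProfile ε) (hasDerivAt_smoothTransition_div_sub_one ε) hw]
  have hconvex := mul_nonneg (deriv_smoothTransition_div_sub_one_nonneg hε (w x))
    (add_nonneg (sq_nonneg (fderiv ℝ w x 1)) (sq_nonneg (fderiv ℝ w x Complex.I)))
  have hslope₀ := smoothTransition.nonneg (w x / ε - 1)
  have hslope₁ := smoothTransition.le_one (w x / ε - 1)
  rw [gradSq]
  nlinarith

theorem tendsto_integral_cutoffProfile_comp_mul {α : Type*} [MeasurableSpace α]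
    {μ : Measure α} {u h : α → ℝ} {M : ℝ} (hu : AEStronglyMeasurable u μ)
    (hu₀ : ∀ x, 0 ≤ u x) (huM : ∀ x, u x ≤ M) (hh : Integrable h μ) :
    Tendsto (fun ε => ∫ x, cutoffProfile ε (u x) * h x ∂μ) (𝓝[>] 0)
      (𝓝 (∫ x, u x * h x ∂μ)) := by
  refine tendsto_integral_filter_of_dominated_convergence (fun x => M * |h x|)
    (Eventually.of_forall fun ε =>
      ((contDiff_cutoffProfile ε).continuous.comp_aestronglyMeasurable hu).mul
        hh.aestronglyMeasurable)
    (Eventually.of_forall fun ε => ae_of_all _ fun x => ?_) (hh.abs.const_mul M)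
    (ae_of_all _ fun x => (tendsto_cutoffProfile (hu₀ x)).mul_const _)
  rw [norm_mul, Real.norm_eq_abs, Real.norm_eq_abs, abs_of_nonneg (cutoffProfile_nonneg (hu₀ x))]
  gcongr
  exact (cutoffProfile_le (hu₀ x)).trans (huM x)

end CutoffProfile

section FilledDomain

variable {X : Type*} [TopologicalSpace X]

theorem connectedComponentIn_compl_frontier_subset {s : Set X} (hs : IsOpen s) {x : X}
    (hx : x ∈ (frontier s)ᶜ) (hxs : x ∈ s) : connectedComponentIn (frontier s)ᶜ x ⊆ s := by
  refine isPreconnected_connectedComponentIn.subset_of_closure_inter_subset hs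
    ⟨x, mem_connectedComponentIn hx, hxs⟩ fun y ⟨hy, hyC⟩ => ?_
  by_contra hys
  exact connectedComponentIn_subset _ _ hyC (hs.frontier_eq ▸ ⟨hy, hys⟩)

/-- The paper's `Ω*`. -/
def filledDomain [Bornology X] (Ω : Set X) : Set X :=
  interior (closure (⋃₀ {C : Set X | Bornology.IsBounded C ∧
    ∃ x ∈ (frontier Ω)ᶜ, C = connectedComponentIn (frontier Ω)ᶜ x}))

theorem isOpen_filledDomain [Bornology X] (Ω : Set X) : IsOpen (filledDomain Ω) :=
  isOpen_interior

theorem IsOpen.subset_filledDomain [Bornology X] {Ω : Set X} (hΩ : IsOpen Ω)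
    (hb : Bornology.IsBounded Ω) : Ω ⊆ filledDomain Ω := by
  refine hΩ.subset_interior_iff.2 fun x hx => subset_closure ?_
  have hx' : x ∈ (frontier Ω)ᶜ := fun h => (hΩ.frontier_eq ▸ h).2 hx
  exact ⟨_, ⟨hb.subset (connectedComponentIn_compl_frontier_subset hΩ hx' hx), x, hx', rfl⟩,
    mem_connectedComponentIn hx'⟩

end FilledDomain

/-- A bounded component of the complement of `∂Ω` cannot reach beyond a ball containing `∂Ω`,
since the ray from any point outside the ball to infinity stays in the same component. -/
theorem Bornology.IsBounded.filledDomain {E : Type*} [NormedAddCommGroup E] [NormedSpace ℝ E]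
    {Ω : Set E} (hΩ : IsBounded Ω) : IsBounded (filledDomain Ω) := by
  obtain ⟨R, hR0, hR⟩ := hΩ.closure.exists_pos_norm_le
  refine isBounded_closedBall.subset
    (interior_subset.trans (closure_minimal ?_ (isClosed_closedBall (x := 0) (ε := R))))
  rintro z ⟨_, ⟨hC, y, -, rfl⟩, hz⟩
  rw [mem_closedBall_zero_iff]
  by_contra! hzR
  have hz0 : 0 < ‖z‖ := hR0.trans hzR
  have hray : (fun t : ℝ => t • z) '' Ici 1 ⊆ connectedComponentIn (frontier Ω)ᶜ y := by
    rw [connectedComponentIn_eq hz]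
    refine (isPreconnected_Ici.image _ (by fun_prop)).subset_connectedComponentIn
      ⟨1, self_mem_Ici, one_smul ℝ z⟩ ?_
    rintro _ ⟨t, ht, rfl⟩ hfr
    have hle := hR _ (frontier_subset_closure hfr)
    rw [norm_smul, Real.norm_of_nonneg (zero_le_one.trans ht)] at hle
    nlinarith [mem_Ici.1 ht]
  obtain ⟨M, hM0, hM⟩ := (hC.subset hray).exists_pos_norm_le
  have hle := hM _ ⟨M / ‖z‖ + 1, by simp only [mem_Ici]; linarith [div_pos hM0 hz0], rfl⟩
  rw [norm_smul, Real.norm_of_nonneg (by positivity), add_mul, div_mul_cancel₀ _ hz0.ne'] at hle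
  linarith

theorem ContDiffOn.contDiff_of_tsupport_subset {E F : Type*} [NormedAddCommGroup E]
    [NormedSpace ℝ E] [NormedAddCommGroup F] [NormedSpace ℝ F] {n : WithTop ℕ∞} {f : E → F}
    {U : Set E} (hU : IsOpen U) (hf : ContDiffOn ℝ n f U) (hfU : tsupport f ⊆ U) :
    ContDiff ℝ n f := by
  refine contDiff_iff_contDiffAt.2 fun x => ?_
  by_cases hx : x ∈ U
  · exact hf.contDiffAt (hU.mem_nhds hx)
  · exact contDiffAt_const.congr_of_eventuallyEq
      (notMem_tsupport_iff_eventuallyEq.1 fun h => hx (hfU h))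

theorem ContinuousOn.aestronglyMeasurable_indicator {X : Type*} [TopologicalSpace X]
    [MeasurableSpace X] [OpensMeasurableSpace X] {μ : Measure X} {s : Set X} {f : X → ℝ}
    (hf : ContinuousOn f s) (hs : MeasurableSet s) : AEStronglyMeasurable (s.indicator f) μ :=
  (aestronglyMeasurable_indicator_iff hs).2 (hf.aestronglyMeasurable hs)

section BoundedSets

variable {X : Type*} [MetricSpace X] [ProperSpace X]

theorem Bornology.IsBounded.exists_indicator_le {s : Set X} (hs : IsBounded s) {f : X → ℝ}
    (hf : ContinuousOn f (closure s)) : ∃ M, ∀ x, s.indicator f x ≤ M := by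
  obtain ⟨M, hM⟩ := hs.isCompact_closure.exists_bound_of_continuousOn hf
  exact ⟨max M 0, fun x => indicator_apply_le'
    (fun hx => le_max_of_le_left ((le_abs_self _).trans (hM x (subset_closure hx))))
    fun _ => le_max_right M 0⟩

variable [MeasurableSpace X] [OpensMeasurableSpace X] {μ : Measure X} [IsFiniteMeasureOnCompacts μ]

theorem Continuous.integrableOn_of_isBounded {f : X → ℝ} (hf : Continuous f) {s : Set X}
    (hs : Bornology.IsBounded s) : IntegrableOn f s μ :=
  (hf.continuousOn.integrableOn_compact hs.isCompact_closure).mono_set subset_closure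

theorem integrableOn_exp_indicator_mul {Ω : Set X} (hΩ : MeasurableSet Ω)
    (hb : Bornology.IsBounded Ω) {w : X → ℝ} (hw : ContinuousOn w (closure Ω)) {φ : X → ℝ}
    (hφ : Continuous φ) {S : Set X} (hS : Bornology.IsBounded S) :
    IntegrableOn (fun x => exp (Ω.indicator w x) * φ x) S μ := by
  obtain ⟨M, hM⟩ := hb.exists_indicator_le hw
  refine (hφ.integrableOn_of_isBounded hS).bdd_mul (c := exp M)
    (continuous_exp.comp_aestronglyMeasurable
      ((hw.mono subset_closure).aestronglyMeasurable_indicator hΩ)).restrict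
    (ae_of_all _ fun x => ?_)
  rw [norm_of_nonneg (exp_pos _).le]
  exact exp_le_exp.2 (hM x)

end BoundedSets

theorem closure_inter_setOf_le_subset_interior {X : Type*} [TopologicalSpace X] {Ω : Set X}
    {w : X → ℝ} {ε : ℝ} (hε : 0 < ε) (hwc : ∀ x ∈ frontier Ω, w x = 0) :
    closure Ω ∩ {x | ε ≤ w x} ⊆ interior Ω := fun x ⟨hx, hxε⟩ => by
  by_contra hxi
  linarith [hwc x ⟨hx, hxi⟩, show ε ≤ w x from hxε]

section Truncation

variable {Ω : Set ℂ} {w : ℂ → ℝ} {ε : ℝ}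

theorem tsupport_cutoffProfile_comp_indicator_subset (hε : 0 < ε)
    (hw : ContinuousOn w (closure Ω)) :
    tsupport (cutoffProfile ε ∘ Ω.indicator w) ⊆ closure Ω ∩ {x | ε ≤ w x} := by
  refine closure_minimal (fun x hx => ?_)
    (hw.preimage_isClosed_of_isClosed isClosed_closure isClosed_Ici)
  by_cases hxΩ : x ∈ Ω
  · refine ⟨subset_closure hxΩ, show ε ≤ w x from not_lt.1 fun hxε => hx ?_⟩
    simp [indicator_of_mem hxΩ, cutoffProfile_of_le hε hxε.le]
  · exact absurd (by simp [indicator_of_notMem hxΩ, cutoffProfile_of_le hε hε.le]) hx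

theorem neg_integral_cutoffProfile_comp_indicator_mul_lap_le (hΩ : IsOpen Ω)
    (hb : Bornology.IsBounded Ω) (hw₂ : ContDiffOn ℝ 2 w Ω) (hw : ContinuousOn w (closure Ω))
    (hsub : ∀ x ∈ Ω, -lap w x ≤ exp (w x)) (hwc : ∀ x ∈ frontier Ω, w x = 0)
    {φ : ℂ → ℝ} (hφ : ContDiff ℝ 2 φ) (hφ₀ : ∀ x ∈ Ω, 0 ≤ φ x) (hε : 0 < ε) :
    -∫ x, cutoffProfile ε (Ω.indicator w x) * lap φ x ≤
      ∫ x in Ω, exp (Ω.indicator w x) * φ x := by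
  set f := cutoffProfile ε ∘ Ω.indicator w
  have hK := tsupport_cutoffProfile_comp_indicator_subset hε hw
  have hfΩ : tsupport f ⊆ Ω :=
    hK.trans ((closure_inter_setOf_le_subset_interior hε hwc).trans interior_subset)
  have hfc : HasCompactSupport f :=
    hb.isCompact_closure.of_isClosed_subset (isClosed_tsupport f) (hK.trans inter_subset_left)
  have hloc : ∀ x ∈ Ω, f =ᶠ[𝓝 x] cutoffProfile ε ∘ w := fun x hx =>
    eventually_of_mem (hΩ.mem_nhds hx) fun y hy => by simp [f, indicator_of_mem hy]
  have hf : ContDiff ℝ 2 f := ContDiffOn.contDiff_of_tsupport_subset hΩ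
    (((contDiff_cutoffProfile ε).comp_contDiffOn hw₂).congr fun y hy => (hloc y hy).self_of_nhds)
    hfΩ
  refine neg_integral_mul_lap_le hΩ.measurableSet hf hfc hfΩ hφ
    (integrableOn_exp_indicator_mul hΩ.measurableSet hb hw hφ.continuous hb) fun x hx => ?_
  have hlap := neg_le_lap_cutoffProfile_comp hε (hw₂.contDiffAt (hΩ.mem_nhds hx))
    (exp_pos _).le (hsub x hx)
  change _ ≤ lap f x * φ x
  rw [(hloc x hx).lap_eq, indicator_of_mem hx, ← neg_mul]
  exact mul_le_mul_of_nonneg_right hlap (hφ₀ x hx)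

theorem neg_setIntegral_indicator_mul_lap_le (hΩ : IsOpen Ω) (hb : Bornology.IsBounded Ω)
    (hw₂ : ContDiffOn ℝ 2 w Ω) (hw : ContinuousOn w (closure Ω))
    (hsub : ∀ x ∈ Ω, -lap w x ≤ exp (w x)) (hw₀ : ∀ x ∈ Ω, 0 ≤ w x)
    (hwc : ∀ x ∈ frontier Ω, w x = 0) {S : Set ℂ} (hS : Bornology.IsBounded S) (hΩS : Ω ⊆ S)
    {φ : ℂ → ℝ} (hφ : ContDiff ℝ 2 φ) (hφ₀ : ∀ x ∈ Ω, 0 ≤ φ x) :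
    -∫ x in S, Ω.indicator w x * lap φ x ≤ ∫ x in Ω, exp (Ω.indicator w x) * φ x := by
  obtain ⟨M, hM⟩ := hb.exists_indicator_le hw
  have hlim := tendsto_integral_cutoffProfile_comp_mul
    ((hw.mono subset_closure).aestronglyMeasurable_indicator hΩ.measurableSet)
    (indicator_nonneg hw₀) hM (hφ.continuous_lap.integrableOn_of_isBounded (μ := volume) hS)
  refine le_of_tendsto hlim.neg (eventually_mem_nhdsWithin.mono fun ε hε => ?_)
  rw [setIntegral_eq_integral_of_forall_compl_eq_zero fun x hx => by
    rw [indicator_of_notMem fun h => hx (hΩS h), cutoffProfile_of_le hε hε.le, zero_mul]]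
  exact neg_integral_cutoffProfile_comp_indicator_mul_lap_le hΩ hb hw₂ hw hsub hwc hφ hφ₀ hε

end Truncation

theorem extension_is_distributional_subsolution_general
    (Ω : Set ℂ) (hΩopen : IsOpen Ω) (hΩbdd : Bornology.IsBounded Ω)
    (w : ℂ → ℝ) (hw2 : ContDiffOn ℝ 2 w Ω) (hw1 : ContDiffOn ℝ 1 w (closure Ω))
    (hsub : ∀ x ∈ Ω, -lap w x ≤ Real.exp (w x))
    (hwge : ∀ x ∈ Ω, 0 ≤ w x)
    (hwc : ∀ x ∈ frontier Ω, w x = 0)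
    (Ωstar : Set ℂ)
    (hΩstar : Ωstar = interior (closure (⋃₀ {C : Set ℂ | Bornology.IsBounded C ∧
      ∃ x ∈ (frontier Ω)ᶜ, C = connectedComponentIn (frontier Ω)ᶜ x})))
    (what : ℂ → ℝ) (hwhat_in : ∀ x ∈ Ω, what x = w x)
    (hwhat_out : ∀ x ∉ Ω, what x = 0) :
    ∀ φ : ℂ → ℝ, ContDiff ℝ 2 φ → (∀ x ∈ frontier Ωstar, φ x = 0) →
      (∀ x ∈ Ωstar, 0 ≤ φ x) →
      -(∫ x in Ωstar, what x * lap φ x) ≤ ∫ x in Ωstar, Real.exp (what x) * φ x := by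
  intro φ hφ _ hφ₀
  obtain rfl : what = Ω.indicator w := funext fun x => by
    by_cases hx : x ∈ Ω <;> simp [hx, hwhat_in, hwhat_out]
  obtain rfl : Ωstar = filledDomain Ω := hΩstar
  have hΩΩstar := hΩopen.subset_filledDomain hΩbdd
  calc -∫ x in filledDomain Ω, Ω.indicator w x * lap φ x
      ≤ ∫ x in Ω, exp (Ω.indicator w x) * φ x :=
        neg_setIntegral_indicator_mul_lap_le hΩopen hΩbdd hw2 hw1.continuousOn hsub hwge hwc
          hΩbdd.filledDomain hΩΩstar hφ fun x hx => hφ₀ x (hΩΩstar hx)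
    _ ≤ ∫ x in filledDomain Ω, exp (Ω.indicator w x) * φ x :=
        setIntegral_mono_set (integrableOn_exp_indicator_mul hΩopen.measurableSet hΩbdd
          hw1.continuousOn hφ.continuous hΩbdd.filledDomain)
          ((ae_restrict_iff' (isOpen_filledDomain Ω).measurableSet).2
            (ae_of_all _ fun x hx => mul_nonneg (exp_pos _).le (hφ₀ x hx)))
          (ae_of_all _ hΩΩstar)

/-- the extension `ŵ` of `w` by zero to the "filled" domain `Ω*` is a
distributional subsolution of the Liouville equation. -/
theorem extension_is_distributional_subsolution
    (Ω : Set ℂ) (hΩopen : IsOpen Ω) (hΩbdd : Bornology.IsBounded Ω)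
    (hΩconn : IsConnected Ω) (hΩnsc : ¬ SimplyConnectedSpace ↥Ω)
    (hΩC1 : IsC1Boundary Ω)
    (w : ℂ → ℝ) (hw2 : ContDiffOn ℝ 2 w Ω) (hw1 : ContDiffOn ℝ 1 w (closure Ω))
    (hsub : ∀ x ∈ Ω, -lap w x ≤ Real.exp (w x))
    (hwge : ∀ x ∈ Ω, 0 ≤ w x)
    (hwc : ∀ x ∈ frontier Ω, w x = 0)
    (Ωstar : Set ℂ)
    (hΩstar : Ωstar = interior (closure (⋃₀ {C : Set ℂ | Bornology.IsBounded C ∧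
      ∃ x ∈ (frontier Ω)ᶜ, C = connectedComponentIn (frontier Ω)ᶜ x})))
    (what : ℂ → ℝ) (hwhat_in : ∀ x ∈ Ω, what x = w x)
    (hwhat_out : ∀ x ∉ Ω, what x = 0) :
    ∀ φ : ℂ → ℝ, ContDiff ℝ 2 φ → (∀ x ∈ frontier Ωstar, φ x = 0) →
      (∀ x ∈ Ωstar, 0 ≤ φ x) →
      -(∫ x in Ωstar, what x * lap φ x) ≤ ∫ x in Ωstar, Real.exp (what x) * φ x :=
  extension_is_distributional_subsolution_general Ω hΩopen hΩbdd w hw2 hw1 hsub hwge hwc Ωstar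
    hΩstar what hwhat_in hwhat_out
end

section
/- The function ψ : ℝ² → ℝ defined by ψ(x) = (8 − |x|²)/(8 + |x|²) is smooth and satisfies Δψ(x) + e^{U_1(x)} ψ(x) = 0 for every x ∈ ℝ²; moreover ψ > 0 on the open disk B_{√8} = {x : |x| < √8} and ψ(x) = 0 for every x with |x| = √8. -/
open MeasureTheory Metric Real Set

open scoped RealInnerProductSpace

/-! `ψ x = g ‖x‖²` with `g s = (8 - s) / (8 + s)`, and for such radial functions
`Δ (g ∘ ‖·‖²) = 4 g'(s) + 4 s g''(s)` at `s = ‖x‖²`. Here `g' s = -16 / (8 + s)²` and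
`g'' s = 32 / (8 + s)³`, so `Δψ = -64 (8 - s) / (8 + s)³`, which is exactly `-e^{U₁} ψ`
since `e^{U₁} = 64 / (8 + s)²`. -/

section Radial

variable {E : Type*} [NormedAddCommGroup E] [InnerProductSpace ℝ E] {g g' g'' : ℝ → ℝ}

theorem hasFDerivAt_comp_norm_sq {d : ℝ} {x : E} (hg : HasDerivAt g d (‖x‖ ^ 2)) :
    HasFDerivAt (fun z => g (‖z‖ ^ 2)) ((2 * d) • innerSL ℝ x) x := by
  refine (hg.comp_hasFDerivAt x (hasStrictFDerivAt_norm_sq x).hasFDerivAt).congr_fderiv ?_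
  ext v
  simp only [smul_apply, coe_innerSL_apply, nsmul_eq_mul, Nat.cast_ofNat, smul_eq_mul]
  ring

theorem fderiv_fderiv_comp_norm_sq_apply
    (hg : ∀ s, 0 ≤ s → HasDerivAt g (g' s) s) (hg' : ∀ s, 0 ≤ s → HasDerivAt g' (g'' s) s)
    (x v : E) :
    fderiv ℝ (fun y => fderiv ℝ (fun z => g (‖z‖ ^ 2)) y v) x v =
      4 * g'' (‖x‖ ^ 2) * ⟪x, v⟫ ^ 2 + 2 * g' (‖x‖ ^ 2) * ‖v‖ ^ 2 := by
  have hfirst : (fun y => fderiv ℝ (fun z => g (‖z‖ ^ 2)) y v) =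
      fun y => 2 * g' (‖y‖ ^ 2) * ⟪y, v⟫ := by
    funext y
    rw [(hasFDerivAt_comp_norm_sq (hg _ (sq_nonneg _))).fderiv]
    simp [mul_assoc]
  have hsecond : HasFDerivAt (fun y => 2 * g' (‖y‖ ^ 2) * ⟪y, v⟫) _ x :=
    ((hasFDerivAt_comp_norm_sq (hg' _ (sq_nonneg ‖x‖))).const_mul 2).mul
      (((innerSL ℝ).flip v).hasFDerivAt (x := x))
  rw [hfirst, hsecond.fderiv]
  simp only [add_apply, smul_apply, ContinuousLinearMap.flip_apply, innerSL_apply_apply,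
    real_inner_self_eq_norm_sq, smul_eq_mul]
  ring

end Radial

theorem lap_comp_norm_sq {g g' g'' : ℝ → ℝ}
    (hg : ∀ s, 0 ≤ s → HasDerivAt g (g' s) s) (hg' : ∀ s, 0 ≤ s → HasDerivAt g' (g'' s) s)
    (x : ℂ) :
    lap (fun z => g (‖z‖ ^ 2)) x = 4 * g' (‖x‖ ^ 2) + 4 * ‖x‖ ^ 2 * g'' (‖x‖ ^ 2) := by
  rw [lap, fderiv_fderiv_comp_norm_sq_apply hg hg', fderiv_fderiv_comp_norm_sq_apply hg hg',
    Complex.sq_norm, Complex.normSq_apply]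
  simp only [Complex.inner, Complex.mul_re, Complex.conj_re, Complex.conj_im, Complex.I_re,
    Complex.I_im, one_mul, mul_one, zero_mul, mul_neg, sub_neg_eq_add, zero_add, norm_one,
    Complex.norm_I, one_pow]
  ring

theorem exp_Ufun {l : ℝ} (hl : l ≠ 0) (z : ℂ) :
    Real.exp (Ufun l z) = (l / (1 + l ^ 2 / 8 * ‖z‖ ^ 2)) ^ 2 :=
  Real.exp_log (by positivity)

theorem hasDerivAt_sub_div_add {a s : ℝ} (hs : a + s ≠ 0) :
    HasDerivAt (fun t => (a - t) / (a + t)) (-2 * a / (a + s) ^ 2) s := by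
  refine (((hasDerivAt_id s).const_sub a).div ((hasDerivAt_id s).const_add a) hs).congr_deriv ?_
  simp only [id]
  ring

theorem hasDerivAt_div_add_sq {a c s : ℝ} (hs : a + s ≠ 0) :
    HasDerivAt (fun t => c / (a + t) ^ 2) (-2 * c / (a + s) ^ 3) s := by
  refine ((hasDerivAt_const s c).div (((hasDerivAt_id s).const_add a).pow 2)
    (pow_ne_zero 2 hs)).congr_deriv ?_
  simp only [id, Pi.pow_apply]
  field_simp
  ring

/-- the function `ψ(x) = (8-|x|²)/(8+|x|²)` is a smooth entire solution of
`Δψ + e^{U₁}ψ = 0`, positive on `B_{√8}` and vanishing on `∂B_{√8}`. -/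
theorem radial_eigenfunction
    (ψ : ℂ → ℝ)
    (hψ : ∀ x : ℂ, ψ x = (8 - ‖x‖ ^ 2) / (8 + ‖x‖ ^ 2)) :
    ContDiff ℝ (⊤ : ℕ∞) ψ ∧
    (∀ x : ℂ, lap ψ x + Real.exp (Ufun 1 x) * ψ x = 0) ∧
    (∀ x ∈ Metric.ball (0 : ℂ) (Real.sqrt 8), 0 < ψ x) ∧
    (∀ x : ℂ, ‖x‖ = Real.sqrt 8 → ψ x = 0) := by
  have hden (s : ℝ) (hs : 0 ≤ s) : (8 : ℝ) + s ≠ 0 := by positivity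
  obtain rfl : ψ = fun z => (fun s => (8 - s) / (8 + s)) (‖z‖ ^ 2) := funext hψ
  refine ⟨?_, fun x => ?_, fun x hx => ?_, fun x hx => ?_⟩
  · exact (contDiff_const.sub (contDiff_norm_sq ℝ)).div (contDiff_const.add (contDiff_norm_sq ℝ))
      fun z => hden _ (sq_nonneg _)
  · rw [lap_comp_norm_sq (fun s hs => hasDerivAt_sub_div_add (hden s hs))
      (fun s hs => hasDerivAt_div_add_sq (hden s hs)), exp_Ufun one_ne_zero]
    field_simp
    ring
  · have hx2 : ‖x‖ ^ 2 < 8 := by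
      rw [mem_ball_zero_iff] at hx
      simpa using pow_lt_pow_left₀ hx (norm_nonneg x) two_ne_zero
    exact div_pos (by linarith) (by positivity)
  · simp [hx]
end

section
/- Let Φ : B̄₁ → ℂ be continuous on the closed unit disk, holomorphic and injective on the open unit disk B₁, and suppose that the derivative Φ′ extends continuously to B̄₁ with |Φ′| constant on the unit circle ∂B₁. Then Φ is affine: there exist a ∈ ℂ, δ > 0 and θ ∈ ℝ such that Φ(z) = a + δ e^{iθ} z for all z ∈ B̄₁. -/
open MeasureTheory Metric Real Set

open Filter Topology

/-!
An injective holomorphic map has no critical points: near a zero of order `n ≥ 2` of `Φ - Φ z₀`,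
that difference is the `n`-th power of a local coordinate `H`, and the points where `H` takes the
values `u` and `ζ u` (`ζ` a primitive `n`-th root of unity) have the same image. Hence `g = Φ'` is
zero-free on the disk, and the maximum principle for `g` and `1 / g` gives `|Φ'| ≡ k`. A holomorphic
function of constant modulus on a connected open set is constant, so `Φ'` is constant and `Φ` is
affine on the disk, and by continuity on its closure.
-/

lemma AnalyticAt.exists_analyticAt_pow_eq {G : ℂ → ℂ} {z₀ : ℂ} (hG : AnalyticAt ℂ G z₀)
    (hG₀ : G z₀ ≠ 0) {n : ℕ} (hn : n ≠ 0) :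
    ∃ ρ : ℂ → ℂ, AnalyticAt ℂ ρ z₀ ∧ ρ z₀ ≠ 0 ∧ ∀ z, ρ z ^ n = G z := by
  obtain ⟨w, hw⟩ := IsAlgClosed.exists_pow_nat_eq (G z₀) (Nat.pos_of_ne_zero hn)
  have hw₀ : w ≠ 0 := by rintro rfl; exact hG₀ (by rw [← hw, zero_pow hn])
  -- `G z₀ / G z₀ = 1` lies in the slit plane, where `· ^ (1 / n)` is analytic.
  refine ⟨fun z ↦ w * (G z / G z₀) ^ (n⁻¹ : ℂ), ?_, by simp [hG₀, hw₀], fun z ↦ ?_⟩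
  · exact analyticAt_const.mul ((hG.div_const).cpow analyticAt_const (by simp [hG₀]))
  · rw [mul_pow, Complex.cpow_nat_inv_pow _ hn, hw, mul_div_cancel₀ _ hG₀]

lemma not_injOn_pow_of_hasStrictDerivAt {H : ℂ → ℂ} {h' z₀ : ℂ} (hH : HasStrictDerivAt H h' z₀)
    (hh' : h' ≠ 0) (hH₀ : H z₀ = 0) {n : ℕ} (hn : 2 ≤ n) {s : Set ℂ} (hs : s ∈ 𝓝 z₀) :
    ¬ InjOn (fun z ↦ H z ^ n) s := by
  intro hinj
  have hζ := Complex.isPrimitiveRoot_exp n (by omega)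
  set ζ := Complex.exp (2 * Real.pi * Complex.I / n)
  have hHs : ∀ᶠ u in 𝓝 (0 : ℂ), u ∈ H '' s := by
    rw [← hH₀, ← hH.map_nhds_eq hh']
    exact image_mem_map hs
  have hζHs : ∀ᶠ u in 𝓝 (0 : ℂ), ζ * u ∈ H '' s :=
    (continuous_const_mul ζ).tendsto' 0 0 (mul_zero ζ) hHs
  obtain ⟨u, ⟨⟨z₁, hz₁, rfl⟩, z₂, hz₂, hz₂₁⟩, hu⟩ :=
    (((hHs.and hζHs).filter_mono nhdsWithin_le_nhds).and self_mem_nhdsWithin).exists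
      (f := 𝓝[≠] (0 : ℂ))
  obtain rfl : z₂ = z₁ := hinj hz₂ hz₁ (by simp only [hz₂₁, mul_pow, hζ.pow_eq_one, one_mul])
  exact hζ.ne_one (by omega) (mul_right_cancel₀ hu (hz₂₁.symm.trans (one_mul _).symm))

theorem deriv_ne_zero_of_injOn {f : ℂ → ℂ} {U : Set ℂ} {z₀ : ℂ} (hU : IsOpen U)
    (hf : DifferentiableOn ℂ f U) (hinj : InjOn f U) (hz₀ : z₀ ∈ U) : deriv f z₀ ≠ 0 := by
  intro hf'
  have hU₀ : U ∈ 𝓝 z₀ := hU.mem_nhds hz₀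
  have hfa : AnalyticAt ℂ f z₀ := hf.analyticAt hU₀
  have hfin : analyticOrderAt (f · - f z₀) z₀ ≠ ⊤ := by
    rw [ne_eq, analyticOrderAt_eq_top]
    intro h
    have : ∀ᶠ z in 𝓝 z₀, z = z₀ := by
      filter_upwards [h, hU₀] with z hz hzU using hinj hzU hz₀ (sub_eq_zero.mp hz)
    obtain ⟨z, hz, hne⟩ :=
      ((this.filter_mono nhdsWithin_le_nhds).and self_mem_nhdsWithin).exists (f := 𝓝[≠] z₀)
    exact hne hz
  obtain ⟨n, hn⟩ := ENat.ne_top_iff_exists.mp hfin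
  have hn2 : 2 ≤ n := by
    have h1 : analyticOrderAt (deriv f) z₀ ≠ 0 := by
      simpa [hfa.deriv.analyticOrderAt_eq_zero] using hf'
    have h2 := hfa.analyticOrderAt_deriv_add_one
    rw [← hn] at h2
    have : (2 : ℕ∞) ≤ n := by
      rw [← h2, ← one_add_one_eq_two]
      exact add_le_add_left (Order.one_le_iff_ne_zero.mpr h1) 1
    exact_mod_cast this
  obtain ⟨G, hG, hG₀, hfG⟩ := (hfa.fun_sub analyticAt_const).analyticOrderAt_eq_natCast.mp hn.symm
  obtain ⟨ρ, hρ, hρ₀, hρG⟩ := hG.exists_analyticAt_pow_eq hG₀ (n := n) (by omega)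
  have hH : HasStrictDerivAt (fun z ↦ (z - z₀) * ρ z) (ρ z₀) z₀ := by
    simpa using ((hasStrictDerivAt_id z₀).sub (hasStrictDerivAt_const z₀ z₀)).fun_mul
      hρ.hasStrictDerivAt
  refine not_injOn_pow_of_hasStrictDerivAt hH hρ₀ (by simp) hn2 (inter_mem hU₀ hfG) ?_
  rintro z₁ ⟨hz₁U, hz₁ : f z₁ - f z₀ = _⟩ z₂ ⟨hz₂U, hz₂ : f z₂ - f z₀ = _⟩ h
  refine hinj hz₁U hz₂U ((sub_left_inj (a := f z₀)).mp ?_)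
  simpa only [hz₁, hz₂, smul_eq_mul, ← hρG, ← mul_pow] using h

theorem Complex.norm_eq_of_forall_mem_frontier_norm_eq {f : ℂ → ℂ} {U : Set ℂ} {k : ℝ}
    (hU : Bornology.IsBounded U) (hf : DiffContOnCl ℂ f U) (hf₀ : ∀ z ∈ U, f z ≠ 0)
    (hk : ∀ z ∈ frontier U, ‖f z‖ = k) {z : ℂ} (hz : z ∈ closure U) : ‖f z‖ = k := by
  have hle : ∀ z ∈ closure U, ‖f z‖ ≤ k := fun z hz ↦
    norm_le_of_forall_mem_frontier_norm_le hU hf (fun w hw ↦ (hk w hw).le) hz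
  obtain ⟨w, hw⟩ : U.Nonempty := closure_nonempty_iff.mp ⟨z, hz⟩
  have hk₀ : 0 < k := (norm_pos_iff.mpr (hf₀ w hw)).trans_le (hle w (subset_closure hw))
  have hf₀' : ∀ z ∈ closure U, f z ≠ 0 := by
    rw [closure_eq_self_union_frontier]
    rintro z (hzU | hzU)
    · exact hf₀ z hzU
    · exact norm_pos_iff.mp (hk z hzU ▸ hk₀)
  have hinv : DiffContOnCl ℂ (fun z ↦ (f z)⁻¹) U :=
    ⟨hf.differentiableOn.inv hf₀, hf.continuousOn.inv₀ hf₀'⟩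
  have hge : ‖(f z)⁻¹‖ ≤ k⁻¹ :=
    norm_le_of_forall_mem_frontier_norm_le hU hinv (fun w hw ↦ by rw [norm_inv, hk w hw]) hz
  rw [norm_inv, inv_le_inv₀ (norm_pos_iff.mpr (hf₀' z hz)) hk₀] at hge
  exact (hle z hz).antisymm hge

theorem eqOn_closure_add_mul_of_norm_deriv_eq {f : ℂ → ℂ} {U : Set ℂ} {k : ℝ} {z₀ : ℂ}
    (hUo : IsOpen U) (hUc : IsPreconnected U) (hf : ContinuousOn f (closure U))
    (hfd : DifferentiableOn ℂ f U) (hk : ∀ z ∈ U, ‖deriv f z‖ = k) (hz₀ : z₀ ∈ U) :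
    EqOn f (fun z ↦ f z₀ + deriv f z₀ * (z - z₀)) (closure U) := by
  have hf'd : DifferentiableOn ℂ (deriv f) U := (hfd.analyticOnNhd hUo).deriv.differentiableOn
  have hf' : EqOn (deriv f) (fun _ ↦ deriv f z₀) U :=
    Complex.eqOn_of_isPreconnected_of_isMaxOn_norm hUc hUo hf'd hz₀
      fun z hz ↦ by simp [hk z hz, hk z₀ hz₀]
  have haff : Differentiable ℂ (fun z ↦ f z₀ + deriv f z₀ * (z - z₀)) := by fun_prop
  refine EqOn.of_subset_closure ?_ hf haff.continuous.continuousOn subset_closure subset_rfl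
  refine hUo.eqOn_of_deriv_eq hUc hfd haff.differentiableOn (fun z hz ↦ ?_) hz₀ (by simp)
  simp [hf' hz]

/-- a univalent map on the unit disk whose derivative extends continuously
to the closed disk with constant modulus on the unit circle is affine. -/
theorem univalent_constant_modulus_derivative_is_affine
    (Φ : ℂ → ℂ)
    (hΦcont : ContinuousOn Φ (closure (Metric.ball (0 : ℂ) 1)))
    (hΦhol : DifferentiableOn ℂ Φ (Metric.ball (0 : ℂ) 1))
    (hΦinj : Set.InjOn Φ (Metric.ball (0 : ℂ) 1))
    (g : ℂ → ℂ) (hgcont : ContinuousOn g (closure (Metric.ball (0 : ℂ) 1)))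
    (hg : ∀ z ∈ Metric.ball (0 : ℂ) 1, g z = deriv Φ z)
    (hconst : ∃ k : ℝ, ∀ z ∈ Metric.sphere (0 : ℂ) 1, ‖g z‖ = k) :
    ∃ (a : ℂ) (δ θ : ℝ), 0 < δ ∧
      ∀ z ∈ closure (Metric.ball (0 : ℂ) 1),
        Φ z = a + (δ : ℂ) * Complex.exp (θ * Complex.I) * z := by
  obtain ⟨k, hk⟩ := hconst
  have hΦ' : ∀ z ∈ ball (0 : ℂ) 1, deriv Φ z ≠ 0 := fun z hz ↦
    deriv_ne_zero_of_injOn isOpen_ball hΦhol hΦinj hz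
  have hgd : DiffContOnCl ℂ g (ball 0 1) :=
    ⟨(hΦhol.analyticOnNhd isOpen_ball).deriv.differentiableOn.congr hg, hgcont⟩
  have hΦk : ∀ z ∈ ball (0 : ℂ) 1, ‖deriv Φ z‖ = k := fun z hz ↦ hg z hz ▸
    Complex.norm_eq_of_forall_mem_frontier_norm_eq isBounded_ball hgd
      (fun w hw ↦ hg w hw ▸ hΦ' w hw) (by rwa [frontier_ball 0 one_ne_zero]) (subset_closure hz)
  have haff := eqOn_closure_add_mul_of_norm_deriv_eq isOpen_ball (convex_ball 0 1).isPreconnected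
    hΦcont hΦhol hΦk (mem_ball_self one_pos)
  refine ⟨Φ 0, ‖deriv Φ 0‖, Complex.arg (deriv Φ 0),
    norm_pos_iff.mpr (hΦ' 0 (mem_ball_self one_pos)), fun z hz ↦ ?_⟩
  rw [haff hz, Complex.norm_mul_exp_arg_mul_I]
  simp only [sub_zero]
end
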